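/- arXiv:math/0612668 — 5 statements merged into one kernel-verified Lean document; each statement's English description precedes it below -/
import Mathlib

section
/- Let G be a finite group, n ≥ 1 an integer, w an element of the free group on n generators, χ the character of an irreducible finite-dimensional complex representation of G, and z ∈ G. Then Σ_{(x_1,…,x_n) ∈ G^n} χ(w(x_1,…,x_n)·z) = ( Σ_{(x_1,…,x_n) ∈ G^n} χ(w(x_1,…,x_n)) ) · χ(z) / χ(1). -/
open CategoryTheory

/-- For a finite group `G`, `n ≥ 1`, a word `w` in the free group on `n`
generators, an irreducible complex character `χ` of `G` (the character of a simple
finite-dimensional complex representation `V`) and `z ∈ G`: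
`Σ_{x ∈ Gⁿ} χ(w(x)·z) = (Σ_{x ∈ Gⁿ} χ(w(x))) · χ(z) / χ(1)`. -/
theorem statement0 (G : Type) [Group G] [Fintype G] (n : ℕ) (hn : 1 ≤ n)
    (w : FreeGroup (Fin n)) (V : FDRep ℂ G) (hV : Simple V) (z : G) :
    ∑ x : Fin n → G, V.character (FreeGroup.lift x w * z)
      = (∑ x : Fin n → G, V.character (FreeGroup.lift x w)) * V.character z
          / V.character 1 := by
  classical
  -- conjugation formula for word maps
  have hconj : ∀ (h : G) (x : Fin n → G),
      FreeGroup.lift (fun i => h * x i * h⁻¹) w = h * FreeGroup.lift x w * h⁻¹ := by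
    intro h x
    exact (FreeGroup.lift_unique ((MulAut.conj h).toMonoidHom.comp (FreeGroup.lift x))
      (fun i => by simp [MulAut.conj])).symm
  -- the averaged operator
  set T : V →ₗ[ℂ] V := ∑ x : Fin n → G, V.ρ (FreeGroup.lift x w) with hT
  have hcomm : ∀ g : G, V.ρ g * T = T * V.ρ g := by
    intro g
    rw [hT, Finset.mul_sum, Finset.sum_mul]
    have hbij : Function.Bijective (fun (x : Fin n → G) => fun i => g⁻¹ * x i * g⁻¹⁻¹) := by
      constructor
      · intro a b hab
        funext i
        have := congrFun hab i
        simpa using this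
      · intro y
        exact ⟨fun i => g * y i * g⁻¹, by funext i; group⟩
    refine (Fintype.sum_bijective _ hbij _ _ ?_).symm
    intro x
    rw [← map_mul, ← map_mul, hconj g⁻¹ x]
    congr 1
    group
  -- build the equivariant morphism
  let φ : V ⟶ V := ⟨⟨ModuleCat.ofHom T⟩, fun g => by
    ext v
    exact congrFun (congrArg (↑·) (hcomm g).symm) v⟩
  obtain ⟨c, hc⟩ := CategoryTheory.endomorphism_simple_eq_smul_id ℂ φ
  have hTc : T = c • (1 : V →ₗ[ℂ] V) := by
    have := congrArg (fun f : V ⟶ V => f.hom.hom.hom) hc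
    exact this.symm
  -- dimension is nonzero
  have hfr : (Module.finrank ℂ V : ℂ) ≠ 0 := by
    have : Module.finrank ℂ V ≠ 0 := by
      intro h0
      have : Subsingleton V := Module.finrank_zero_iff.mp h0
      exact CategoryTheory.id_nonzero V (by
        apply Action.hom_ext
        apply FGModuleCat.hom_ext
        exact @Subsingleton.elim (V →ₗ[ℂ] V) _ _ _)
    exact_mod_cast this
  have hsum1 : ∑ x : Fin n → G, V.character (FreeGroup.lift x w * z)
      = c * V.character z := by
    unfold FDRep.character
    rw [← map_sum]
    have : ∑ x : Fin n → G, V.ρ (FreeGroup.lift x w * z) = T * V.ρ z := by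
      rw [hT, Finset.sum_mul]
      exact Finset.sum_congr rfl fun x _ => by rw [map_mul]
    rw [this, hTc, smul_mul_assoc, one_mul, map_smul, smul_eq_mul]
  have hsum2 : ∑ x : Fin n → G, V.character (FreeGroup.lift x w)
      = c * (Module.finrank ℂ V : ℂ) := by
    unfold FDRep.character
    rw [← map_sum, ← hT, hTc, map_smul, LinearMap.trace_one, smul_eq_mul]
  rw [hsum1, hsum2, FDRep.char_one]
  field_simp
end

section
/- Let G be a finite group and g ≥ 1 an integer. Then |G| divides the number of 2g-tuples (x_1,y_1,…,x_g,y_g) ∈ G^{2g} satisfying [x_1,y_1][x_2,y_2]⋯[x_g,y_g] = 1; that is, |G| divides the number of group homomorphisms from the fundamental group of a closed genus-g Riemann surface to G. -/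
open MulAction
open scoped Classical

namespace Statement3Aux

variable {G : Type*} [Group G] [Fintype G]

/-- Product of commutators of a `2n`-tuple. -/
def cprod {n : ℕ} (q : (Fin n → G) × (Fin n → G)) : G :=
  (List.ofFn fun i => q.1 i * q.2 i * (q.1 i)⁻¹ * (q.2 i)⁻¹).prod

lemma cprod_conj {n : ℕ} (b : G) (q : (Fin n → G) × (Fin n → G)) :
    cprod (fun i => b * q.1 i * b⁻¹, fun i => b * q.2 i * b⁻¹) = b * cprod q * b⁻¹ := by
  unfold cprod
  have h : (List.ofFn fun i => (b * q.1 i * b⁻¹) * (b * q.2 i * b⁻¹) * (b * q.1 i * b⁻¹)⁻¹ *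
        (b * q.2 i * b⁻¹)⁻¹)
      = (List.ofFn fun i => q.1 i * q.2 i * (q.1 i)⁻¹ * (q.2 i)⁻¹).map (MulAut.conj b) := by
    rw [List.map_ofFn]
    congr 1
    funext i
    simp only [Function.comp_apply, MulAut.conj_apply]
    group
  rw [h, ← map_list_prod]
  simp [MulAut.conj_apply]

/-- Cardinality of the centralizer of `y` as a subtype. -/
noncomputable def cc (y : G) : ℕ := Nat.card {z : G // z * y = y * z}

lemma cc_conj (b y : G) : cc (b * y * b⁻¹) = cc y := by
  unfold cc
  refine Nat.card_congr ⟨fun z => ⟨b⁻¹ * z.1 * b, ?_⟩, fun z => ⟨b * z.1 * b⁻¹, ?_⟩, ?_, ?_⟩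
  · obtain ⟨z, hz⟩ := z
    calc b⁻¹ * z * b * y = b⁻¹ * (z * (b * y * b⁻¹)) * b := by group
      _ = b⁻¹ * ((b * y * b⁻¹) * z) * b := by rw [hz]
      _ = y * (b⁻¹ * z * b) := by group
  · obtain ⟨z, hz⟩ := z
    calc b * z * b⁻¹ * (b * y * b⁻¹) = b * (z * y) * b⁻¹ := by group
      _ = b * (y * z) * b⁻¹ := by rw [hz]
      _ = (b * y * b⁻¹) * (b * z * b⁻¹) := by group
  · intro z; ext; simp [mul_assoc]
  · intro z; ext; simp [mul_assoc]

lemma card_conj_fiber (y d : G) :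
    Nat.card {x : G // x * y * x⁻¹ = d} =
      if ∃ x : G, x * y * x⁻¹ = d then cc y else 0 := by
  split_ifs with h
  · obtain ⟨x₀, h₀⟩ := h
    refine Nat.card_congr ⟨fun x => ⟨x₀⁻¹ * x.1, ?_⟩, fun z => ⟨x₀ * z.1, ?_⟩, ?_, ?_⟩
    · obtain ⟨x, hx⟩ := x
      calc x₀⁻¹ * x * y = x₀⁻¹ * (x * y * x⁻¹) * x := by group
        _ = x₀⁻¹ * d * x := by rw [hx]
        _ = x₀⁻¹ * (x₀ * y * x₀⁻¹) * x := by rw [h₀]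
        _ = y * (x₀⁻¹ * x) := by group
    · obtain ⟨z, hz⟩ := z
      calc x₀ * z * y * (x₀ * z)⁻¹ = x₀ * (z * y) * z⁻¹ * x₀⁻¹ := by group
        _ = x₀ * (y * z) * z⁻¹ * x₀⁻¹ := by rw [hz]
        _ = x₀ * y * x₀⁻¹ := by group
      exact h₀
    · intro x; ext; simp [mul_assoc]
    · intro z; ext; simp [mul_assoc]
  · have : IsEmpty {x : G // x * y * x⁻¹ = d} := ⟨fun x => h ⟨x.1, x.2⟩⟩
    simp [Nat.card_of_isEmpty]

variable {n : ℕ}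

/-- the counting function -/
noncomputable def F (v : G × ((Fin n → G) × (Fin n → G))) : ℕ :=
  Nat.card {x : G // x * v.1 * x⁻¹ = (cprod v.2)⁻¹ * v.1}

lemma smul_fst (a : ConjAct G) (v : G × ((Fin n → G) × (Fin n → G))) :
    (a • v).1 = ConjAct.ofConjAct a * v.1 * (ConjAct.ofConjAct a)⁻¹ := by
  rw [Prod.smul_fst, ConjAct.smul_def]

lemma cprod_smul (a : ConjAct G) (q : (Fin n → G) × (Fin n → G)) :
    cprod (a • q) = ConjAct.ofConjAct a * cprod q * (ConjAct.ofConjAct a)⁻¹ := by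
  set b := ConjAct.ofConjAct a
  have : a • q = (fun i => b * q.1 i * b⁻¹, fun i => b * q.2 i * b⁻¹) := by
    ext i <;> simp [Prod.smul_fst, Prod.smul_snd, Pi.smul_apply, ConjAct.smul_def] <;> rfl
  rw [this, cprod_conj]

lemma F_smul (a : ConjAct G) (v : G × ((Fin n → G) × (Fin n → G))) : F (a • v) = F v := by
  set b := ConjAct.ofConjAct a with hb
  obtain ⟨y, q⟩ := v
  have h1 : (a • (y, q)).1 = b * y * b⁻¹ := smul_fst a (y, q)
  have h2 : cprod (a • (y, q)).2 = b * cprod q * b⁻¹ := cprod_smul a q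
  unfold F
  rw [h1, h2]
  set c := cprod q
  have key : ∀ x : G, x * (b * y * b⁻¹) * x⁻¹ = (b * c * b⁻¹)⁻¹ * (b * y * b⁻¹) ↔
      (b⁻¹ * x * b) * y * (b⁻¹ * x * b)⁻¹ = c⁻¹ * y := by
    intro x
    constructor
    · intro h
      calc (b⁻¹ * x * b) * y * (b⁻¹ * x * b)⁻¹
          = b⁻¹ * (x * (b * y * b⁻¹) * x⁻¹) * b := by group
        _ = b⁻¹ * ((b * c * b⁻¹)⁻¹ * (b * y * b⁻¹)) * b := by rw [h]
        _ = c⁻¹ * y := by group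
    · intro h
      calc x * (b * y * b⁻¹) * x⁻¹
          = b * ((b⁻¹ * x * b) * y * (b⁻¹ * x * b)⁻¹) * b⁻¹ := by group
        _ = b * (c⁻¹ * y) * b⁻¹ := by rw [h]
        _ = (b * c * b⁻¹)⁻¹ * (b * y * b⁻¹) := by group
  rw [card_conj_fiber, card_conj_fiber]
  have hex : (∃ x : G, x * (b * y * b⁻¹) * x⁻¹ = (b * c * b⁻¹)⁻¹ * (b * y * b⁻¹)) ↔
      ∃ x : G, x * y * x⁻¹ = c⁻¹ * y := by
    constructor
    · rintro ⟨x, hx⟩; exact ⟨b⁻¹ * x * b, (key x).1 hx⟩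
    · rintro ⟨x, hx⟩
      refine ⟨b * x * b⁻¹, (key (b * x * b⁻¹)).2 ?_⟩
      convert hx using 2 <;> group
  rw [if_congr hex rfl rfl, cc_conj]

lemma cc_eq_card_stabilizer (y : G) : cc y = Nat.card (stabilizer (ConjAct G) y) := by
  refine Nat.card_congr ⟨fun z => ⟨ConjAct.toConjAct z.1, ?_⟩, fun a =>
    ⟨ConjAct.ofConjAct a.1, ?_⟩, ?_, ?_⟩
  · obtain ⟨z, hz⟩ := z
    show ConjAct.toConjAct z • y = y
    rw [ConjAct.smul_def, ConjAct.ofConjAct_toConjAct, hz]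
    group
  · obtain ⟨a, ha⟩ := a
    have := mem_stabilizer_iff.mp ha
    rw [ConjAct.smul_def] at this
    have h2 : ConjAct.ofConjAct a * y = y * ConjAct.ofConjAct a := by
      conv_rhs => rw [← this]
      group
    exact h2
  · intro z; ext; simp
  · intro a; ext; simp

lemma dvd_orbit_mul_F (v : G × ((Fin n → G) × (Fin n → G))) :
    Fintype.card G ∣ Nat.card (orbit (ConjAct G) v) * F v := by
  unfold F
  rw [card_conj_fiber]
  split_ifs with h
  · -- F v = cc v.1
    have hle : stabilizer (ConjAct G) v ≤ stabilizer (ConjAct G) v.1 := by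
      intro a ha
      have := mem_stabilizer_iff.mp ha
      exact mem_stabilizer_iff.mpr (by rw [← Prod.smul_fst, this])
    obtain ⟨k, hk⟩ := Subgroup.card_dvd_of_le hle
    have horb : Nat.card (orbit (ConjAct G) v) =
        Nat.card (ConjAct G ⧸ stabilizer (ConjAct G) v) :=
      Nat.card_congr (orbitEquivQuotientStabilizer (ConjAct G) v)
    have hG : Nat.card (ConjAct G) =
        Nat.card (ConjAct G ⧸ stabilizer (ConjAct G) v) * Nat.card (stabilizer (ConjAct G) v) :=
      Subgroup.card_eq_card_quotient_mul_card_subgroup _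
    have hGG : Nat.card (ConjAct G) = Fintype.card G := by
      rw [Nat.card_congr ConjAct.ofConjAct.toEquiv, Nat.card_eq_fintype_card]
    refine ⟨k, ?_⟩
    rw [cc_eq_card_stabilizer, hk, horb, ← hGG, hG]
    ring
  · simp

end Statement3Aux

/-- For a finite group `G` and `g ≥ 1`, `|G|` divides the number of
`2g`-tuples `(x₁,y₁,…,x_g,y_g) ∈ G^{2g}` with `[x₁,y₁]⋯[x_g,y_g] = 1`, i.e. `|G|` divides
the number of homomorphisms from the fundamental group of a closed genus-`g` surface
to `G`. -/
theorem statement3 (G : Type*) [Group G] [Fintype G] (g : ℕ) (hg : 1 ≤ g) :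
    Fintype.card G ∣
      Nat.card {p : (Fin g → G) × (Fin g → G) //
        (List.ofFn fun i => p.1 i * p.2 i * (p.1 i)⁻¹ * (p.2 i)⁻¹).prod = 1} := by
  classical
  obtain ⟨n, rfl⟩ : ∃ n, g = n + 1 := ⟨g - 1, (Nat.succ_pred_eq_of_pos hg).symm⟩
  set α := G × ((Fin n → G) × (Fin n → G)) with hα
  -- the type-level equivalence
  let e : ((Fin (n + 1) → G) × (Fin (n + 1) → G)) ≃ α × G :=
    { toFun := fun p => ((p.2 0, (fun i => p.1 i.succ, fun i => p.2 i.succ)), p.1 0)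
      invFun := fun s => (Fin.cons s.2 s.1.2.1, Fin.cons s.1.1 s.1.2.2)
      left_inv := fun p => Prod.ext (Fin.cons_self_tail p.1) (Fin.cons_self_tail p.2)
      right_inv := fun s => by
        obtain ⟨⟨y, xs, ys⟩, x⟩ := s
        simp only [Fin.cons_zero, Fin.cons_succ] }
  have key : ∀ x y c : G, x * y * x⁻¹ * y⁻¹ * c = 1 ↔ x * y * x⁻¹ = c⁻¹ * y := by
    intro x y c
    constructor
    · intro h
      have h2 : x * y * x⁻¹ * y⁻¹ = c⁻¹ := mul_eq_one_iff_eq_inv.mp h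
      calc x * y * x⁻¹ = (x * y * x⁻¹ * y⁻¹) * y := by group
        _ = c⁻¹ * y := by rw [h2]
    · intro h
      rw [show x * y * x⁻¹ * y⁻¹ * c = (x * y * x⁻¹) * y⁻¹ * c by group, h]
      group
  have hiff : ∀ p : (Fin (n + 1) → G) × (Fin (n + 1) → G),
      (List.ofFn fun i => p.1 i * p.2 i * (p.1 i)⁻¹ * (p.2 i)⁻¹).prod = 1 ↔
        (e p).2 * (e p).1.1 * (e p).2⁻¹ =
          (Statement3Aux.cprod (e p).1.2)⁻¹ * (e p).1.1 := by
    intro p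
    rw [List.ofFn_succ, List.prod_cons]
    exact key (p.1 0) (p.2 0) _
  -- transfer to the sigma type
  have hcard : Nat.card {p : (Fin (n + 1) → G) × (Fin (n + 1) → G) //
      (List.ofFn fun i => p.1 i * p.2 i * (p.1 i)⁻¹ * (p.2 i)⁻¹).prod = 1} =
      ∑ v : α, Statement3Aux.F v := by
    rw [Nat.card_congr ((Equiv.subtypeEquiv e hiff).trans
      (Equiv.subtypeProdEquivSigmaSubtype fun (v : α) (x : G) =>
        x * v.1 * x⁻¹ = (Statement3Aux.cprod v.2)⁻¹ * v.1))]
    rw [Nat.card_eq_fintype_card, Fintype.card_sigma]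
    exact Finset.sum_congr rfl fun v _ => (Nat.card_eq_fintype_card).symm
  rw [hcard]
  -- sum over orbits
  rw [← Fintype.sum_fiberwise (fun v : α => (Quotient.mk'' v : orbitRel.Quotient (ConjAct G) α))
    Statement3Aux.F]
  refine Finset.dvd_sum fun ω _ => ?_
  have hconst : ∀ v : {v : α // (Quotient.mk'' v : orbitRel.Quotient (ConjAct G) α) = ω},
      Statement3Aux.F v.1 = Statement3Aux.F ω.out := by
    rintro ⟨v, hv⟩
    have : v ∈ orbit (ConjAct G) ω.out := by
      rw [← MulAction.orbitRel_apply, ← Quotient.eq'']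
      rw [hv, Quotient.out_eq']
    obtain ⟨a, ha⟩ := this
    show Statement3Aux.F v = Statement3Aux.F ω.out
    rw [← ha]
    exact Statement3Aux.F_smul a ω.out
  rw [Finset.sum_congr rfl fun v _ => hconst v, Finset.sum_const, Finset.card_univ, smul_eq_mul]
  have hfibcard : Fintype.card {v : α // (Quotient.mk'' v : orbitRel.Quotient (ConjAct G) α) = ω}
      = Nat.card (orbit (ConjAct G) ω.out) := by
    rw [← Nat.card_eq_fintype_card]
    refine Nat.card_congr (Equiv.subtypeEquivRight fun v => ?_)
    have h5 : (Quotient.mk'' v : orbitRel.Quotient (ConjAct G) α) = Quotient.mk'' ω.out ↔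
        v ∈ orbit (ConjAct G) ω.out := by
      rw [Quotient.eq'']
      exact MulAction.orbitRel_apply
    rwa [Quotient.out_eq'] at h5
  rw [hfibcard]
  exact Statement3Aux.dvd_orbit_mul_F ω.out
end

section
/- Let K be an algebraically closed field, n ≥ 1 and g ≥ 1 integers, ζ ∈ K a primitive n-th root of unity, and A_1, B_1, …, A_g, B_g ∈ GL(n,K) matrices satisfying [A_1,B_1][A_2,B_2]⋯[A_g,B_g] = ζ·I_n. If a matrix Z ∈ M_n(K) commutes with each of A_1, B_1, …, A_g, B_g, then Z is a scalar matrix: Z = c·I_n for some c ∈ K. -/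
open scoped MatrixGroups

set_option maxHeartbeats 1000000
set_option synthInstance.maxHeartbeats 400000

/-- Let `K` be an algebraically closed field, `n ≥ 1`, `g ≥ 1`, `ζ ∈ K` a
primitive `n`-th root of unity and `A₁,B₁,…,A_g,B_g ∈ GL(n,K)` with
`[A₁,B₁]⋯[A_g,B_g] = ζ·Iₙ`.  If `Z ∈ Mₙ(K)` commutes with every `Aᵢ` and `Bᵢ`, then `Z`
is a scalar matrix. -/
theorem statement4 (K : Type*) [Field K] [IsAlgClosed K] (n g : ℕ) (hn : 1 ≤ n)
    (hg : 1 ≤ g) (ζ : K) (hζ : IsPrimitiveRoot ζ n)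
    (A B : Fin g → GL (Fin n) K)
    (hcomm : (↑((List.ofFn fun i => A i * B i * (A i)⁻¹ * (B i)⁻¹).prod) :
        Matrix (Fin n) (Fin n) K) = ζ • (1 : Matrix (Fin n) (Fin n) K))
    (Z : Matrix (Fin n) (Fin n) K)
    (hZA : ∀ i, Z * (A i : Matrix (Fin n) (Fin n) K) = (A i : Matrix (Fin n) (Fin n) K) * Z)
    (hZB : ∀ i, Z * (B i : Matrix (Fin n) (Fin n) K) = (B i : Matrix (Fin n) (Fin n) K) * Z) :
    ∃ c : K, Z = c • (1 : Matrix (Fin n) (Fin n) K) := by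
  haveI : Nonempty (Fin n) := Fin.pos_iff_nonempty.mp hn
  set f : Module.End K (Fin n → K) := Matrix.toLin' Z with hf
  obtain ⟨c, hc⟩ := Module.End.exists_eigenvalue f
  set E := f.eigenspace c with hE
  by_cases hEtop : E = ⊤
  · refine ⟨c, Matrix.toLin'.injective ?_⟩
    rw [map_smul, Matrix.toLin'_one]
    refine LinearMap.ext fun v => ?_
    have hv : v ∈ E := hEtop ▸ Submodule.mem_top
    rw [hE, Module.End.mem_eigenspace_iff] at hv
    simpa [hf] using hv
  · exfalso
    -- every matrix commuting with Z preserves E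
    have hmap : ∀ M : Matrix (Fin n) (Fin n) K, Z * M = M * Z →
        Set.MapsTo (Matrix.toLin' M) E E := by
      intro M hM x hx
      rw [hE, SetLike.mem_coe, Module.End.mem_eigenspace_iff] at hx ⊢
      have h1 : f (Matrix.toLin' M x) = Matrix.toLin' M (f x) := by
        rw [hf, ← LinearMap.comp_apply, ← Matrix.toLin'_mul, hM, Matrix.toLin'_mul,
          LinearMap.comp_apply]
      rw [h1, hx, map_smul]
    -- the centralizer of Z as a submonoid of matrices
    set C : Submonoid (Matrix (Fin n) (Fin n) K) := Submonoid.centralizer {Z} with hC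
    have hmemC : ∀ M : Matrix (Fin n) (Fin n) K, Z * M = M * Z → M ∈ C := by
      intro M hM
      rw [hC, Submonoid.mem_centralizer_iff]
      intro z hz
      rw [Set.mem_singleton_iff] at hz
      rw [hz, hM]
    have hmapsC : ∀ M : C, Set.MapsTo (Matrix.toLin' (M : Matrix (Fin n) (Fin n) K)) E E := by
      intro M
      exact hmap M (M.2 Z rfl)
    -- the determinant-of-restriction monoid hom
    set ψ : C →* K :=
      { toFun := fun M => LinearMap.det
          ((Matrix.toLin' (M : Matrix (Fin n) (Fin n) K)).restrict (hmapsC M))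
        map_one' := by
          show LinearMap.det
            ((Matrix.toLin' ((1 : C) : Matrix (Fin n) (Fin n) K)).restrict (hmapsC 1)) = 1
          have : ((Matrix.toLin' ((1 : C) : Matrix (Fin n) (Fin n) K)).restrict
              (hmapsC 1)) = LinearMap.id := by
            refine LinearMap.ext fun x => Subtype.ext ?_
            simp [Matrix.toLin'_one]
          rw [this, LinearMap.det_id]
        map_mul' := by
          intro M N
          show LinearMap.det
              ((Matrix.toLin' ((M * N : C) : Matrix (Fin n) (Fin n) K)).restrict
                (hmapsC (M * N))) = _
          have h1 : ((Matrix.toLin' ((M * N : C) : Matrix (Fin n) (Fin n) K)).restrict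
              (hmapsC (M * N))) =
              ((Matrix.toLin' (M : Matrix (Fin n) (Fin n) K)).restrict (hmapsC M)) *
              ((Matrix.toLin' (N : Matrix (Fin n) (Fin n) K)).restrict (hmapsC N)) := by
            refine LinearMap.ext fun x => Subtype.ext ?_
            simp [Matrix.toLin'_mul, Module.End.mul_apply]
            exact (Matrix.mulVec_mulVec _ _ _).symm
          rw [h1]
          exact MonoidHom.map_mul LinearMap.det _ _ } with hψ
    -- commuting GL elements and their inverses, as elements of C
    have hinv : ∀ (U : GL (Fin n) K), Z * (U : Matrix (Fin n) (Fin n) K) =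
        (U : Matrix (Fin n) (Fin n) K) * Z →
        Z * ((U⁻¹ : GL (Fin n) K) : Matrix (Fin n) (Fin n) K) =
        ((U⁻¹ : GL (Fin n) K) : Matrix (Fin n) (Fin n) K) * Z := by
      intro U hU
      have h : Commute Z (U : Matrix (Fin n) (Fin n) K) := hU
      exact h.units_inv_right
    set a : Fin g → C := fun i => ⟨(A i : Matrix (Fin n) (Fin n) K), hmemC _ (hZA i)⟩
      with ha
    set b : Fin g → C := fun i => ⟨(B i : Matrix (Fin n) (Fin n) K), hmemC _ (hZB i)⟩
      with hb
    set a' : Fin g → C := fun i => ⟨(((A i)⁻¹ : GL (Fin n) K) : Matrix (Fin n) (Fin n) K),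
      hmemC _ (hinv (A i) (hZA i))⟩ with ha'
    set b' : Fin g → C := fun i => ⟨(((B i)⁻¹ : GL (Fin n) K) : Matrix (Fin n) (Fin n) K),
      hmemC _ (hinv (B i) (hZB i))⟩ with hb'
    have haa' : ∀ i, a i * a' i = 1 := by
      intro i
      refine Subtype.ext ?_
      show (A i : Matrix (Fin n) (Fin n) K) * _ = 1
      rw [← Units.val_mul, mul_inv_cancel, Units.val_one]
    have hbb' : ∀ i, b i * b' i = 1 := by
      intro i
      refine Subtype.ext ?_
      show (B i : Matrix (Fin n) (Fin n) K) * _ = 1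
      rw [← Units.val_mul, mul_inv_cancel, Units.val_one]
    -- ψ of each commutator is 1
    have hψcomm : ∀ i, ψ (a i * b i * a' i * b' i) = 1 := by
      intro i
      have := congrArg ψ (haa' i)
      have h1 : ψ (a i) * ψ (a' i) = 1 := by rw [← map_mul, haa' i, map_one]
      have h2 : ψ (b i) * ψ (b' i) = 1 := by rw [← map_mul, hbb' i, map_one]
      rw [map_mul, map_mul, map_mul]
      calc ψ (a i) * ψ (b i) * ψ (a' i) * ψ (b' i)
          = (ψ (a i) * ψ (a' i)) * (ψ (b i) * ψ (b' i)) := by ring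
        _ = 1 := by rw [h1, h2, one_mul]
    -- the full product as an element of C
    set P : C := (List.ofFn fun i => a i * b i * a' i * b' i).prod with hP
    have hψP : ψ P = 1 := by
      rw [hP, map_list_prod]
      refine List.prod_eq_one ?_
      intro x hx
      rw [List.mem_map] at hx
      obtain ⟨y, hy, rfl⟩ := hx
      rw [List.mem_ofFn] at hy
      obtain ⟨i, rfl⟩ := hy
      exact hψcomm i
    -- but P is ζ • 1, whose ψ-value is ζ ^ finrank E
    have hPval : (P : Matrix (Fin n) (Fin n) K) = ζ • (1 : Matrix (Fin n) (Fin n) K) := by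
      rw [hP, SubmonoidClass.coe_list_prod, ← hcomm,
        show (((List.ofFn fun i => A i * B i * (A i)⁻¹ * (B i)⁻¹).prod : GL (Fin n) K) :
            Matrix (Fin n) (Fin n) K) =
          ((List.ofFn fun i => A i * B i * (A i)⁻¹ * (B i)⁻¹).map
            (Units.coeHom (Matrix (Fin n) (Fin n) K))).prod
          from map_list_prod (Units.coeHom _) _]
      congr 1
      rw [List.map_ofFn, List.map_ofFn]
      rfl
    have hPeq : P = ⟨ζ • (1 : Matrix (Fin n) (Fin n) K), hmemC _ (by
        rw [Matrix.mul_smul, Matrix.smul_mul, mul_one, one_mul])⟩ := Subtype.ext hPval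
    have hψP2 : ψ P = ζ ^ Module.finrank K E := by
      rw [hPeq]
      show LinearMap.det ((Matrix.toLin' (ζ • (1 : Matrix (Fin n) (Fin n) K))).restrict _) = _
      have h1 : Matrix.toLin' (ζ • (1 : Matrix (Fin n) (Fin n) K)) =
          ζ • (1 : Module.End K (Fin n → K)) := by
        rw [map_smul, Matrix.toLin'_one]; rfl
      have h2 : ∀ (h : Set.MapsTo (Matrix.toLin' (ζ • (1 : Matrix (Fin n) (Fin n) K))) E E),
          (Matrix.toLin' (ζ • (1 : Matrix (Fin n) (Fin n) K))).restrict h =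
          ζ • (1 : Module.End K E) := by
        intro h
        refine LinearMap.ext fun x => Subtype.ext ?_
        have := congrFun (congrArg DFunLike.coe h1) (x : Fin n → K)
        simpa using this
      rw [h2]
      rw [LinearMap.det_smul]
      simp
    -- finish: ζ ^ d = 1 with 0 < d < n contradicts primitivity
    have hd1 : 0 < Module.finrank K E := by
      have h0 : E ≠ ⊥ := hc
      haveI : Nontrivial E := Submodule.nontrivial_iff_ne_bot.mpr h0
      exact Module.finrank_pos
    have hd2 : Module.finrank K E < n := by
      have := Submodule.finrank_lt (K := K) (V := Fin n → K) hEtop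
      rwa [Module.finrank_fin_fun] at this
    exact hζ.pow_ne_one_of_pos_of_lt hd1.ne' hd2 (hψP2 ▸ hψP)
end

section
/- Let K be an algebraically closed field, n ≥ 1 an integer, ζ ∈ K a primitive n-th root of unity, and A, B ∈ GL(n,K) matrices satisfying A B A⁻¹ B⁻¹ = ζ·I_n. Then there exist nonzero scalars α, β ∈ K^× such that A^n = α·I_n and B^n = β·I_n. -/
open Polynomial Matrix

-- coefficient of composition with C μ * X
lemma aux_coeff_comp {K : Type*} [Field K] (μ : K) (p : K[X]) (k : ℕ) :
    (p.comp (C μ * X)).coeff k = μ ^ k * p.coeff k := by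
  induction p using Polynomial.induction_on' with
  | add p q hp hq => simp [add_comp, hp, hq, mul_add]
  | monomial e a =>
      rw [monomial_comp]
      rw [mul_pow, ← C_pow, ← mul_assoc, ← C_mul, C_mul_X_pow_eq_monomial]
      simp only [coeff_monomial]
      split_ifs with h
      · subst h; ring
      · ring


-- charpoly is invariant under conjugation
lemma aux_charpoly_conj {K : Type*} [Field K] {n : ℕ}
    (u v M : Matrix (Fin n) (Fin n) K) (huv : u * v = 1) (hvu : v * u = 1) :
    (u * M * v).charpoly = M.charpoly := by
  have key : charmatrix (u * M * v) = u.map C * charmatrix M * v.map C := by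
    unfold charmatrix
    simp only [RingHom.mapMatrix_apply]
    rw [Matrix.mul_sub, Matrix.sub_mul]
    have h1 : u.map C * Matrix.scalar (Fin n) (X : K[X]) * v.map C
        = Matrix.scalar (Fin n) (X : K[X]) := by
      rw [← Matrix.scalar_commute (X : K[X]) (fun r' => mul_comm _ _) (u.map C)]
      rw [Matrix.mul_assoc, ← Matrix.map_mul, huv]
      simp
    rw [h1, ← Matrix.map_mul, ← Matrix.map_mul]
  unfold Matrix.charpoly
  rw [key, Matrix.det_mul, Matrix.det_mul]
  have h2 : (u.map (C : K →+* K[X])).det * (v.map (C : K →+* K[X])).det = 1 := by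
    rw [← Matrix.det_mul, ← Matrix.map_mul, huv]
    simp
  linear_combination M.charmatrix.det * h2

lemma aux_pow_scalar {K : Type*} [Field K] {n : ℕ} (hn : 1 ≤ n) (μ : K)
    (hμ : IsPrimitiveRoot μ n) (M u v : Matrix (Fin n) (Fin n) K)
    (huv : u * v = 1) (hvu : v * u = 1) (h : u * M * v = μ • M) :
    M ^ n = (-(M.charpoly.coeff 0)) • (1 : Matrix (Fin n) (Fin n) K) := by
  set p := M.charpoly with hp
  have step1 : (μ • M).charpoly = p := by rw [← h]; exact aux_charpoly_conj u v M huv hvu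
  have step2 : p.comp (C μ * X) = p := by
    set f : K[X] →+* K[X] := eval₂RingHom C (C μ * X) with hf
    have hfc : ∀ q : K[X], f q = q.comp (C μ * X) := fun q => rfl
    have fX : f X = C μ * X := by simp [hf]
    have fC : ∀ a : K, f (C a) = C a := fun a => by simp [hf]
    have e1 : ((μ • M).charmatrix).map f = C μ • M.charmatrix := by
      ext i j : 2
      by_cases hij : i = j
      · subst hij
        simp only [Matrix.map_apply, Matrix.charmatrix_apply_eq, Matrix.smul_apply, smul_eq_mul]
        rw [map_sub, fX, fC, mul_sub, ← C_mul]
      · simp only [Matrix.map_apply, Matrix.charmatrix_apply_ne _ _ _ hij, Matrix.smul_apply,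
          smul_eq_mul]
        rw [map_neg, fC, mul_neg, ← C_mul]
    have e2 : f ((μ • M).charpoly) = p := by
      unfold Matrix.charpoly
      rw [RingHom.map_det, RingHom.mapMatrix_apply, e1, Matrix.det_smul, ← C_pow,
        Fintype.card_fin, hμ.pow_eq_one]
      simp [hp, Matrix.charpoly]
    rw [← hfc, ← step1, e2, step1]
  have step3 : ∀ k, 0 < k → k < n → p.coeff k = 0 := by
    intro k hk0 hkn
    have hthis := aux_coeff_comp μ p k
    rw [step2] at hthis
    have hne : μ ^ k ≠ 1 := hμ.pow_ne_one_of_pos_of_lt (by omega) hkn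
    have h0 : (μ ^ k - 1) * p.coeff k = 0 := by linear_combination -hthis
    rcases mul_eq_zero.mp h0 with h1 | h2
    · exact absurd (sub_eq_zero.mp h1) hne
    · exact h2
  have hdeg : p.natDegree = n := by
    rw [hp, Matrix.charpoly_natDegree_eq_dim, Fintype.card_fin]
  have hmonic : p.Monic := M.charpoly_monic
  have step4 : p = X ^ n + C (p.coeff 0) := by
    ext k
    rw [coeff_add, coeff_X_pow, coeff_C]
    rcases Nat.lt_trichotomy k n with hlt | heq | hgt
    · rcases Nat.eq_zero_or_pos k with rfl | hk0
      · rw [if_neg (by omega), if_pos rfl]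
        ring
      · rw [if_neg (by omega), if_neg (by omega), step3 k hk0 hlt]
        ring
    · subst heq
      have hone : p.coeff k = 1 := by
        have := hmonic.coeff_natDegree
        rwa [hdeg] at this
      rw [hone, if_pos rfl, if_neg (by omega)]
      ring
    · rw [coeff_eq_zero_of_natDegree_lt (by omega), if_neg (by omega), if_neg (by omega)]
      ring
  have cayley := M.aeval_self_charpoly
  rw [← hp, step4] at cayley
  rw [map_add, aeval_X_pow, aeval_C, Algebra.algebraMap_eq_smul_one] at cayley
  rw [neg_smul]
  exact eq_neg_of_add_eq_zero_left cayley

open scoped MatrixGroups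

/-- Let `K` be an algebraically closed field, `n ≥ 1`, `ζ ∈ K` a primitive
`n`-th root of unity and `A, B ∈ GL(n,K)` with `A B A⁻¹ B⁻¹ = ζ·Iₙ`.  Then there are
nonzero scalars `α, β ∈ K` with `Aⁿ = α·Iₙ` and `Bⁿ = β·Iₙ`. -/
theorem statement6 (K : Type*) [Field K] [IsAlgClosed K] (n : ℕ) (hn : 1 ≤ n)
    (ζ : K) (hζ : IsPrimitiveRoot ζ n) (A B : GL (Fin n) K)
    (hcomm : (↑(A * B * A⁻¹ * B⁻¹) : Matrix (Fin n) (Fin n) K)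
      = ζ • (1 : Matrix (Fin n) (Fin n) K)) :
    ∃ α β : K, α ≠ 0 ∧ β ≠ 0 ∧
      (A : Matrix (Fin n) (Fin n) K) ^ n = α • (1 : Matrix (Fin n) (Fin n) K) ∧
      (B : Matrix (Fin n) (Fin n) K) ^ n = β • (1 : Matrix (Fin n) (Fin n) K) := by
  set a : Matrix (Fin n) (Fin n) K := (↑A : Matrix (Fin n) (Fin n) K) with ha_def
  set b : Matrix (Fin n) (Fin n) K := (↑B : Matrix (Fin n) (Fin n) K) with hb_def
  set a' : Matrix (Fin n) (Fin n) K := (↑A⁻¹ : Matrix (Fin n) (Fin n) K) with ha'_def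
  set b' : Matrix (Fin n) (Fin n) K := (↑B⁻¹ : Matrix (Fin n) (Fin n) K) with hb'_def
  have hAA : a * a' = 1 := A.mul_inv
  have hA'A : (a' : Matrix (Fin n) (Fin n) K) * a = 1 := A.inv_mul
  have hBB : b * b' = 1 := B.mul_inv
  have hB'B : (b' : Matrix (Fin n) (Fin n) K) * b = 1 := B.inv_mul
  have hc : a * b * a' * b' = ζ • 1 := by
    rw [ha_def, hb_def, ha'_def, hb'_def]
    simpa only [Units.val_mul] using hcomm
  have hζ0 : ζ ≠ 0 := hζ.ne_zero (by omega)
  have hb : a * b * a' = ζ • b := by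
    calc a * b * a'
        = a * b * a' * b' * b := by
          rw [mul_assoc (a * b * a') b' b, hB'B, mul_one]
      _ = (ζ • (1 : Matrix (Fin n) (Fin n) K)) * b := by rw [hc]
      _ = ζ • b := by rw [smul_mul_assoc, one_mul]
  have hab : a * b
      = ζ • (b * a) := by
    calc a * b
        = a * b * a' * a := by rw [mul_assoc (a * b) a' a, hA'A, mul_one]
      _ = (ζ • b) * a := by rw [hb]
      _ = ζ • (b * a) := smul_mul_assoc _ _ _
  have hba : b * a
      = ζ⁻¹ • (a * b) := by
    rw [hab, smul_smul, inv_mul_cancel₀ hζ0, one_smul]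
  have ha : b * a * b'
      = ζ⁻¹ • a := by
    calc b * a * b'
        = (ζ⁻¹ • (a * b)) * b' := by rw [hba]
      _ = ζ⁻¹ • (a * (b * b')) := by
          rw [smul_mul_assoc, mul_assoc]
      _ = ζ⁻¹ • a := by rw [hBB, mul_one]
  have hBn := aux_pow_scalar hn ζ hζ b a a' hAA hA'A hb
  have hAn := aux_pow_scalar hn ζ⁻¹ hζ.inv a b b' hBB hB'B ha
  have key : ∀ U : GL (Fin n) K,
      (Matrix.charpoly (↑U : Matrix (Fin n) (Fin n) K)).coeff 0 ≠ 0 := by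
    intro U hc0
    have hdet : (↑U : Matrix (Fin n) (Fin n) K).det ≠ 0 :=
      ((Matrix.isUnit_iff_isUnit_det _).mp U.isUnit).ne_zero
    have hd := Matrix.det_eq_sign_charpoly_coeff (↑U : Matrix (Fin n) (Fin n) K)
    rw [hc0, mul_zero] at hd
    exact hdet hd
  exact ⟨_, _, neg_ne_zero.mpr (key A), neg_ne_zero.mpr (key B), hAn, hBn⟩
end

section
/- Let g ≥ 0 and k ≥ 0 be integers and let S^g_k := {(r,s,t) ∈ ℤ_{≥0}³ : t ≤ g, and (r+3s+3t ≤ 3g−3+k or r+2s+2t < 2g−2+k)}, a finite set. Then in the field ℚ(a,b,c) of rational functions in three indeterminates: Σ_{(r,s,t) ∈ S^g_k} a^r b^s c^t = (1−c^{g+1})/((1−a)(1−b)(1−c)) − a^{k−2} b^{g} (1−c^{g+1}/b^{g+1}) / ((1−a)(1−c/b)(1−b/a²)) − (b^{g+⌊(k+1)/2⌋−1} + a·b^{g+⌊k/2⌋−1})(1−c^{g+1}/b^{g+1}) / ((1−b)(1−c/b)(1−a²/b)) − a^{3g+k−2}(1−c^{g}/a^{3g}) / ((1−a)(1−c/a³)(1−b/a³))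 + a^{k−2} b^{g} (1−c^{g}/b^{g}) / ((1−a)(1−c/b)(1−b/a³)). -/
set_option maxHeartbeats 1000000

namespace Statement18

/-- The field `ℚ(a,b,c)` of rational functions in three indeterminates. -/
noncomputable abbrev RF : Type := FractionRing (MvPolynomial (Fin 3) ℚ)

noncomputable def a : RF := algebraMap (MvPolynomial (Fin 3) ℚ) RF (MvPolynomial.X 0)
noncomputable def b : RF := algebraMap (MvPolynomial (Fin 3) ℚ) RF (MvPolynomial.X 1)
noncomputable def c : RF := algebraMap (MvPolynomial (Fin 3) ℚ) RF (MvPolynomial.X 2)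

/-- The set `S^g_k = {(r,s,t) ∈ ℤ_{≥0}³ : t ≤ g and (r+3s+3t ≤ 3g−3+k or r+2s+2t < 2g−2+k)}`. -/
def Sgk (g k : ℕ) : Set (ℕ × ℕ × ℕ) :=
  {x | x.2.2 ≤ g ∧
    ((x.1 : ℤ) + 3 * x.2.1 + 3 * x.2.2 ≤ 3 * (g : ℤ) - 3 + k ∨
     (x.1 : ℤ) + 2 * x.2.1 + 2 * x.2.2 < 2 * (g : ℤ) - 2 + k)}

open MvPolynomial Finset

/-! ### Nonvanishing facts -/

lemma amap_ne {p : MvPolynomial (Fin 3) ℚ}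
    (h : eval (fun i : Fin 3 => if i = 0 then (2:ℚ) else if i = 1 then 3 else 5) p ≠ 0) :
    algebraMap (MvPolynomial (Fin 3) ℚ) RF p ≠ 0 := by
  intro h0
  exact h (by rw [(IsFractionRing.to_map_eq_zero_iff (K := RF)).mp h0, map_zero])

lemma ha : a ≠ 0 := amap_ne (by simp)
lemma hb : b ≠ 0 := amap_ne (by simp)
lemma hc : c ≠ 0 := amap_ne (by simp)
lemma h1a : (1:RF) - a ≠ 0 := by
  have : (1:RF) - a = algebraMap (MvPolynomial (Fin 3) ℚ) RF (1 - X 0) := by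
    simp [a, map_sub, map_one]
  rw [this]; exact amap_ne (by simp; norm_num)
lemma h1b : (1:RF) - b ≠ 0 := by
  have : (1:RF) - b = algebraMap (MvPolynomial (Fin 3) ℚ) RF (1 - X 1) := by
    simp [b, map_sub, map_one]
  rw [this]; exact amap_ne (by simp; norm_num)
lemma h1c : (1:RF) - c ≠ 0 := by
  have : (1:RF) - c = algebraMap (MvPolynomial (Fin 3) ℚ) RF (1 - X 2) := by
    simp [c, map_sub, map_one]
  rw [this]; exact amap_ne (by simp; norm_num)
lemma hba2 : a^2 - b ≠ 0 := by
  have : a^2 - b = algebraMap (MvPolynomial (Fin 3) ℚ) RF (X 0^2 - X 1) := by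
    simp [a, b, map_sub, map_pow]
  rw [this]; exact amap_ne (by simp; norm_num)
lemma hba3 : a^3 - b ≠ 0 := by
  have : a^3 - b = algebraMap (MvPolynomial (Fin 3) ℚ) RF (X 0^3 - X 1) := by
    simp [a, b, map_sub, map_pow]
  rw [this]; exact amap_ne (by simp; norm_num)
lemma hcb : b - c ≠ 0 := by
  have : b - c = algebraMap (MvPolynomial (Fin 3) ℚ) RF (X 1 - X 2) := by
    simp [b, c, map_sub]
  rw [this]; exact amap_ne (by simp; norm_num)
lemma hca3 : a^3 - c ≠ 0 := by
  have : a^3 - c = algebraMap (MvPolynomial (Fin 3) ℚ) RF (X 0^3 - X 2) := by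
    simp [a, c, map_sub, map_pow]
  rw [this]; exact amap_ne (by simp; norm_num)

lemma hab3' : b - a^3 ≠ 0 := fun h => hba3 (by rw [← neg_sub]; simpa using congrArg Neg.neg h)
lemma hab2' : b - a^2 ≠ 0 := fun h => hba2 (by rw [← neg_sub]; simpa using congrArg Neg.neg h)
lemma hbc' : c - b ≠ 0 := fun h => hcb (by rw [← neg_sub]; simpa using congrArg Neg.neg h)
lemma hca3' : c - a^3 ≠ 0 := fun h => hca3 (by rw [← neg_sub]; simpa using congrArg Neg.neg h)

/-! ### Geometric sums -/

lemma geo1 (x : RF) (hx : (1:RF) - x ≠ 0) (n : ℕ) :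
    ∑ i ∈ range n, x ^ i = (1 - x ^ n)/(1 - x) := by
  rw [geom_sum_eq (by intro h; rw [h] at hx; simp at hx) n]
  rw [div_eq_div_iff (by intro h; apply hx; have := congrArg Neg.neg h; simp [neg_sub] at this; simp [this]) hx]
  ring

lemma geo2 (x y : RF) (hxy : x - y ≠ 0) (n : ℕ) :
    ∑ i ∈ range n, x ^ i * y ^ (n - 1 - i) = (x ^ n - y ^ n)/(x - y) := by
  rw [eq_div_iff hxy, geom_sum₂_mul]

/-! ### The finset decomposition -/

def blob1 (k t h : ℕ) : Finset (ℕ × ℕ × ℕ) :=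
  (range (h+1)).biUnion (fun s => (range (3*(h-s)+k-2)).image (fun r => (r, s, t)))
def blob2 (k t h : ℕ) : Finset (ℕ × ℕ × ℕ) :=
  (range ((k-3)/2)).biUnion (fun j => (range (k-4-2*j)).image (fun r => (r, h+1+j, t)))
def Sfin (g k : ℕ) : Finset (ℕ × ℕ × ℕ) :=
  (range (g+1)).biUnion (fun t => blob1 k t (g-t) ∪ blob2 k t (g-t))

lemma mem_blob1 {k t h : ℕ} {x : ℕ × ℕ × ℕ} :
    x ∈ blob1 k t h ↔ x.2.1 ≤ h ∧ x.1 < 3*(h-x.2.1)+k-2 ∧ x.2.2 = t := by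
  obtain ⟨r, s, t'⟩ := x
  simp only [blob1, mem_biUnion, mem_range, mem_image, Prod.mk.injEq]
  constructor
  · rintro ⟨s', hs', r', hr', rfl, rfl, rfl⟩; exact ⟨by omega, hr', rfl⟩
  · rintro ⟨h1, h2, rfl⟩; exact ⟨s, by omega, r, h2, rfl, rfl, rfl⟩

lemma mem_blob2 {k t h : ℕ} {x : ℕ × ℕ × ℕ} :
    x ∈ blob2 k t h ↔ ∃ j < (k-3)/2, x.1 < k-4-2*j ∧ x.2.1 = h+1+j ∧ x.2.2 = t := by
  obtain ⟨r, s, t'⟩ := x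
  simp only [blob2, mem_biUnion, mem_range, mem_image, Prod.mk.injEq]
  constructor
  · rintro ⟨j, hj, r', hr', rfl, rfl, rfl⟩; exact ⟨j, hj, hr', rfl, rfl⟩
  · rintro ⟨j, hj, h2, rfl, rfl⟩; exact ⟨j, hj, r, h2, rfl, rfl, rfl⟩

lemma sgk_eq (g k : ℕ) : Sgk g k = ↑(Sfin g k) := by
  ext ⟨r, s, t⟩
  simp only [Sgk, Set.mem_setOf_eq, Finset.coe_biUnion, Sfin, Set.mem_iUnion, Finset.mem_coe,
    mem_range, mem_union, mem_blob1, mem_blob2]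
  constructor
  · rintro ⟨ht, hcond⟩
    refine ⟨t, by omega, ?_⟩
    by_cases hs : s ≤ g - t
    · exact Or.inl ⟨hs, by omega, rfl⟩
    · exact Or.inr ⟨s - (g-t) - 1, by omega, by omega, by omega, rfl⟩
  · rintro ⟨t', ht', (⟨h1, h2, rfl⟩ | ⟨j, hj, h2, h3, rfl⟩)⟩ <;> exact ⟨by omega, by omega⟩

/-! ### Sums over the blobs -/

noncomputable def G (n : ℕ) : RF := ∑ r ∈ range n, a^r
noncomputable def P1 (k h : ℕ) : RF := ∑ s ∈ range (h+1), b^s * G (3*(h-s)+k-2)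
noncomputable def P2 (k h : ℕ) : RF := ∑ j ∈ range ((k-3)/2), b^(h+1+j) * G (k-4-2*j)

lemma sum_blob1 (k t h : ℕ) :
    ∑ x ∈ blob1 k t h, a^x.1*b^x.2.1*c^x.2.2 = c^t * P1 k h := by
  rw [blob1, Finset.sum_biUnion ?hd, P1, Finset.mul_sum]
  case hd =>
    intro u _ v _ huv
    refine Finset.disjoint_left.mpr fun z hz1 hz2 => huv ?_
    simp only [mem_image, mem_range] at hz1 hz2
    obtain ⟨r1, _, rfl⟩ := hz1
    obtain ⟨r2, _, heq⟩ := hz2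
    simp only [Prod.mk.injEq] at heq
    omega
  refine Finset.sum_congr rfl fun s _ => ?_
  rw [Finset.sum_image (by intro u _ v _ h; simpa using h)]
  simp only
  rw [← Finset.sum_mul, ← Finset.sum_mul, G]
  ring

lemma sum_blob2 (k t h : ℕ) :
    ∑ x ∈ blob2 k t h, a^x.1*b^x.2.1*c^x.2.2 = c^t * P2 k h := by
  rw [blob2, Finset.sum_biUnion ?hd, P2, Finset.mul_sum]
  case hd =>
    intro u _ v _ huv
    refine Finset.disjoint_left.mpr fun z hz1 hz2 => huv ?_
    simp only [mem_image, mem_range] at hz1 hz2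
    obtain ⟨r1, _, rfl⟩ := hz1
    obtain ⟨r2, _, heq⟩ := hz2
    simp only [Prod.mk.injEq] at heq
    omega
  refine Finset.sum_congr rfl fun j _ => ?_
  rw [Finset.sum_image (by intro u _ v _ h; simpa using h)]
  simp only
  rw [← Finset.sum_mul, ← Finset.sum_mul, G]
  ring

lemma sum_Sfin (g k : ℕ) :
    ∑ x ∈ Sfin g k, a^x.1*b^x.2.1*c^x.2.2
      = ∑ t ∈ range (g+1), c^t * (P1 k (g-t) + P2 k (g-t)) := by
  rw [Sfin, Finset.sum_biUnion ?hd]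
  case hd =>
    intro u _ v _ huv
    refine Finset.disjoint_left.mpr fun z hz1 hz2 => huv ?_
    rw [mem_union, mem_blob1, mem_blob2] at hz1 hz2
    have e1 : z.2.2 = u := by
      rcases hz1 with ⟨_, _, e⟩ | ⟨_, _, _, _, e⟩ <;> exact e
    have e2 : z.2.2 = v := by
      rcases hz2 with ⟨_, _, e⟩ | ⟨_, _, _, _, e⟩ <;> exact e
    omega
  refine Finset.sum_congr rfl fun t _ => ?_
  rw [Finset.sum_union ?hd2, sum_blob1, sum_blob2, mul_add]
  case hd2 =>
    refine Finset.disjoint_left.mpr fun z hz1 hz2 => ?_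
    rw [mem_blob1] at hz1; rw [mem_blob2] at hz2
    obtain ⟨j, _, _, e, _⟩ := hz2
    omega

/-! ### Fraction bookkeeping helpers -/

lemma fr {D E cof : RF} (hD : D ≠ 0) (hE : E ≠ 0) (h : D * cof = E) (x : RF) :
    x / D = x * cof / E := by
  rw [div_eq_div_iff hD hE, ← h]; ring

lemma osd {x : RF} (y : RF) (hx : x ≠ 0) : 1 - y/x = (x-y)/x := by
  rw [sub_div, div_self hx]

/-! ### Closed forms for P1, P2 -/

lemma P1_eq (m h : ℕ) : P1 (m+2) h
    = ((1 - b^(h+1))/(1-b) - a^m * ((b^(h+1) - (a^3)^(h+1))/(b - a^3)))/(1-a) := by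
  have step : ∀ s ∈ range (h+1), b^s * G (3*(h-s)+(m+2)-2)
      = (b^s - a^m * (b^s * (a^3)^(h+1-1-s)))/(1-a) := by
    intro s hs
    rw [mem_range] at hs
    rw [G, geo1 a h1a]
    have e : 3*(h-s)+(m+2)-2 = m + 3*(h+1-1-s) := by omega
    rw [e, pow_add, pow_mul]
    field_simp
  rw [P1, Finset.sum_congr rfl step, ← Finset.sum_div, Finset.sum_sub_distrib,
    ← Finset.mul_sum, geo1 b h1b, geo2 b (a^3) hab3']

lemma P1_small (k h : ℕ) (hk : k ≤ 1) : P1 k h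
    = ((1 - b^h)/(1-b) - a^(k+1) * ((b^h - (a^3)^h)/(b - a^3)))/(1-a) := by
  have step : ∀ s ∈ range h, b^s * G (3*(h-s)+k-2)
      = (b^s - a^(k+1) * (b^s * (a^3)^(h-1-s)))/(1-a) := by
    intro s hs
    rw [mem_range] at hs
    rw [G, geo1 a h1a]
    have e : 3*(h-s)+k-2 = (k+1) + 3*(h-1-s) := by omega
    rw [e, pow_add, pow_mul]
    field_simp
  rw [P1, Finset.sum_range_succ, show 3*(h-h)+k-2 = 0 from by omega]
  rw [show G 0 = 0 from by simp [G], mul_zero, add_zero]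
  rw [Finset.sum_congr rfl step, ← Finset.sum_div, Finset.sum_sub_distrib,
    ← Finset.mul_sum, geo1 b h1b, geo2 b (a^3) hab3']

lemma P2_even (u h : ℕ) : P2 (2*u+4) h
    = (b^(h+1) * ((1 - b^u)/(1-b)) - a^2 * (b^(h+1) * ((b^u - (a^2)^u)/(b-a^2))))/(1-a) := by
  have step : ∀ j ∈ range u, b^(h+1+j) * G (2*u+4-4-2*j)
      = (b^(h+1) * b^j - a^2 * (b^(h+1) * (b^j * (a^2)^(u-1-j))))/(1-a) := by
    intro j hj
    rw [mem_range] at hj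
    rw [G, geo1 a h1a]
    have e : 2*u+4-4-2*j = 2 + 2*(u-1-j) := by omega
    rw [e]
    field_simp
    ring
  rw [P2, show (2*u+4-3)/2 = u from by omega, Finset.sum_congr rfl step, ← Finset.sum_div,
    Finset.sum_sub_distrib, ← Finset.mul_sum, ← Finset.mul_sum, ← Finset.mul_sum,
    geo1 b h1b, geo2 b (a^2) hab2']

lemma P2_odd (u h : ℕ) : P2 (2*u+5) h
    = (b^(h+1) * ((1 - b^(u+1))/(1-b)) - a * (b^(h+1) * ((b^(u+1) - (a^2)^(u+1))/(b-a^2))))/(1-a) := by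
  have step : ∀ j ∈ range (u+1), b^(h+1+j) * G (2*u+5-4-2*j)
      = (b^(h+1) * b^j - a * (b^(h+1) * (b^j * (a^2)^(u+1-1-j))))/(1-a) := by
    intro j hj
    rw [mem_range] at hj
    rw [G, geo1 a h1a]
    have e : 2*u+5-4-2*j = 1 + 2*(u+1-1-j) := by omega
    rw [e]
    field_simp
    ring
  rw [P2, show (2*u+5-3)/2 = u+1 from by omega, Finset.sum_congr rfl step, ← Finset.sum_div,
    Finset.sum_sub_distrib, ← Finset.mul_sum, ← Finset.mul_sum, ← Finset.mul_sum,
    geo1 b h1b, geo2 b (a^2) hab2']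

lemma P1f (m h : ℕ) : P1 (m+2) h
    = (1 - b^(h+1))/((1-b)*(1-a)) - a^m * (b^(h+1) - (a^3)^(h+1))/((b-a^3)*(1-a)) := by
  rw [P1_eq, ← mul_div_assoc, sub_div, div_div, div_div]

lemma P1sf (k h : ℕ) (hk : k ≤ 1) : P1 k h
    = (1 - b^h)/((1-b)*(1-a)) - a^(k+1) * (b^h - (a^3)^h)/((b-a^3)*(1-a)) := by
  rw [P1_small k h hk, ← mul_div_assoc, sub_div, div_div, div_div]

lemma P2ef (u h : ℕ) : P2 (2*u+4) h
    = b^(h+1) * (1 - b^u)/((1-b)*(1-a)) - a^2 * (b^(h+1) * (b^u - (a^2)^u))/((b-a^2)*(1-a)) := by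
  rw [P2_even]
  simp only [← mul_div_assoc]
  rw [sub_div, div_div, div_div]

lemma P2of (u h : ℕ) : P2 (2*u+5) h
    = b^(h+1) * (1 - b^(u+1))/((1-b)*(1-a)) - a * (b^(h+1) * (b^(u+1) - (a^2)^(u+1)))/((b-a^2)*(1-a)) := by
  rw [P2_odd]
  simp only [← mul_div_assoc]
  rw [sub_div, div_div, div_div]

lemma P2z2 (h : ℕ) : P2 2 h = 0 := by simp [P2]
lemma P2z3 (h : ℕ) : P2 3 h = 0 := by simp [P2]
lemma P2z0 (h : ℕ) : P2 0 h = 0 := by simp [P2]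
lemma P2z1 (h : ℕ) : P2 1 h = 0 := by simp [P2]

/-! ### The per-slice closed form -/

noncomputable def Fc (K D1 D2 : RF) (h : ℕ) : RF :=
  1/((1-a)*(1-b)) - K*a^2*b^h/((1-a)*(a^2-b)) + (D1 + a*D2)*b*b^h/((1-b)*(a^2-b))
    - (K*(a^3)^h - K*b^h)*a^3/((1-a)*(a^3-b))

section cases
variable (h : ℕ)

-- common denominator for the per-slice identities
local notation "E₀" => (1-a)*((1-b)*((a^2-b)*(a^3-b)))

lemma hE0 : E₀ ≠ 0 := mul_ne_zero h1a (mul_ne_zero h1b (mul_ne_zero hba2 hba3))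

lemma c_even (u : ℕ) : P1 (2*u+4) h + P2 (2*u+4) h = Fc (a^(2*(u+1))) (b^(u+1)) (b^(u+1)) h := by
  rw [P2ef, show 2*u+4 = 2*u+2+2 from by ring, P1f, Fc]
  simp only [fr (mul_ne_zero h1b h1a) hE0
       (show ((1-b)*(1-a))*((a^2-b)*(a^3-b)) = E₀ from by ring),
     fr (mul_ne_zero hab3' h1a) hE0
       (show ((b-a^3)*(1-a))*(-((1-b)*(a^2-b))) = E₀ from by ring),
     fr (mul_ne_zero hab2' h1a) hE0
       (show ((b-a^2)*(1-a))*(-((1-b)*(a^3-b))) = E₀ from by ring),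
     fr (mul_ne_zero h1a h1b) hE0
       (show ((1-a)*(1-b))*((a^2-b)*(a^3-b)) = E₀ from by ring),
     fr (mul_ne_zero h1a hba2) hE0
       (show ((1-a)*(a^2-b))*((1-b)*(a^3-b)) = E₀ from by ring),
     fr (mul_ne_zero h1b hba2) hE0
       (show ((1-b)*(a^2-b))*((1-a)*(a^3-b)) = E₀ from by ring),
     fr (mul_ne_zero h1a hba3) hE0
       (show ((1-a)*(a^3-b))*((1-b)*(a^2-b)) = E₀ from by ring)]
  simp only [← sub_div, ← add_div]
  rw [div_eq_div_iff hE0 hE0]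
  ring

lemma c_odd (u : ℕ) : P1 (2*u+5) h + P2 (2*u+5) h = Fc (a^(2*u+3)) (b^(u+2)) (b^(u+1)) h := by
  rw [P2of, show 2*u+5 = 2*u+3+2 from by ring, P1f, Fc]
  simp only [fr (mul_ne_zero h1b h1a) hE0
       (show ((1-b)*(1-a))*((a^2-b)*(a^3-b)) = E₀ from by ring),
     fr (mul_ne_zero hab3' h1a) hE0
       (show ((b-a^3)*(1-a))*(-((1-b)*(a^2-b))) = E₀ from by ring),
     fr (mul_ne_zero hab2' h1a) hE0
       (show ((b-a^2)*(1-a))*(-((1-b)*(a^3-b))) = E₀ from by ring),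
     fr (mul_ne_zero h1a h1b) hE0
       (show ((1-a)*(1-b))*((a^2-b)*(a^3-b)) = E₀ from by ring),
     fr (mul_ne_zero h1a hba2) hE0
       (show ((1-a)*(a^2-b))*((1-b)*(a^3-b)) = E₀ from by ring),
     fr (mul_ne_zero h1b hba2) hE0
       (show ((1-b)*(a^2-b))*((1-a)*(a^3-b)) = E₀ from by ring),
     fr (mul_ne_zero h1a hba3) hE0
       (show ((1-a)*(a^3-b))*((1-b)*(a^2-b)) = E₀ from by ring)]
  simp only [← sub_div, ← add_div]
  rw [div_eq_div_iff hE0 hE0]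
  ring

lemma c_two : P1 2 h + P2 2 h = Fc 1 1 1 h := by
  rw [P2z2, add_zero, show P1 2 h = P1 (0+2) h from rfl, P1f, Fc]
  simp only [fr (mul_ne_zero h1b h1a) hE0
       (show ((1-b)*(1-a))*((a^2-b)*(a^3-b)) = E₀ from by ring),
     fr (mul_ne_zero hab3' h1a) hE0
       (show ((b-a^3)*(1-a))*(-((1-b)*(a^2-b))) = E₀ from by ring),
     fr (mul_ne_zero h1a h1b) hE0
       (show ((1-a)*(1-b))*((a^2-b)*(a^3-b)) = E₀ from by ring),
     fr (mul_ne_zero h1a hba2) hE0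
       (show ((1-a)*(a^2-b))*((1-b)*(a^3-b)) = E₀ from by ring),
     fr (mul_ne_zero h1b hba2) hE0
       (show ((1-b)*(a^2-b))*((1-a)*(a^3-b)) = E₀ from by ring),
     fr (mul_ne_zero h1a hba3) hE0
       (show ((1-a)*(a^3-b))*((1-b)*(a^2-b)) = E₀ from by ring)]
  simp only [← sub_div, ← add_div]
  rw [div_eq_div_iff hE0 hE0]
  ring

lemma c_three : P1 3 h + P2 3 h = Fc a b 1 h := by
  rw [P2z3, add_zero, show P1 3 h = P1 (1+2) h from rfl, P1f, Fc]
  simp only [fr (mul_ne_zero h1b h1a) hE0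
       (show ((1-b)*(1-a))*((a^2-b)*(a^3-b)) = E₀ from by ring),
     fr (mul_ne_zero hab3' h1a) hE0
       (show ((b-a^3)*(1-a))*(-((1-b)*(a^2-b))) = E₀ from by ring),
     fr (mul_ne_zero h1a h1b) hE0
       (show ((1-a)*(1-b))*((a^2-b)*(a^3-b)) = E₀ from by ring),
     fr (mul_ne_zero h1a hba2) hE0
       (show ((1-a)*(a^2-b))*((1-b)*(a^3-b)) = E₀ from by ring),
     fr (mul_ne_zero h1b hba2) hE0
       (show ((1-b)*(a^2-b))*((1-a)*(a^3-b)) = E₀ from by ring),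
     fr (mul_ne_zero h1a hba3) hE0
       (show ((1-a)*(a^3-b))*((1-b)*(a^2-b)) = E₀ from by ring)]
  simp only [← sub_div, ← add_div]
  rw [div_eq_div_iff hE0 hE0]
  ring

lemma c_zero : P1 0 h + P2 0 h = Fc ((a^2)⁻¹) (b⁻¹) (b⁻¹) h := by
  rw [P2z0, P1sf 0 h (by norm_num), Fc, add_zero]
  rw [show (a^2)⁻¹*a^2 = 1 from inv_mul_cancel₀ (pow_ne_zero 2 ha), one_mul]
  rw [show (b⁻¹ + a*b⁻¹)*b = 1+a from by
    rw [add_mul, inv_mul_cancel₀ hb, mul_assoc, inv_mul_cancel₀ hb, mul_one]]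
  rw [show ((a^2)⁻¹*(a^3)^h - (a^2)⁻¹*b^h)*a^3 = ((a^3)^h - b^h)*a from by
    rw [show ((a^2)⁻¹*(a^3)^h - (a^2)⁻¹*b^h)*a^3 = ((a^3)^h - b^h)*a*(a^2*(a^2)⁻¹) from by ring,
      mul_inv_cancel₀ (pow_ne_zero 2 ha), mul_one]]
  simp only [fr (mul_ne_zero h1b h1a) hE0
       (show ((1-b)*(1-a))*((a^2-b)*(a^3-b)) = E₀ from by ring),
     fr (mul_ne_zero hab3' h1a) hE0
       (show ((b-a^3)*(1-a))*(-((1-b)*(a^2-b))) = E₀ from by ring),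
     fr (mul_ne_zero h1a h1b) hE0
       (show ((1-a)*(1-b))*((a^2-b)*(a^3-b)) = E₀ from by ring),
     fr (mul_ne_zero h1a hba2) hE0
       (show ((1-a)*(a^2-b))*((1-b)*(a^3-b)) = E₀ from by ring),
     fr (mul_ne_zero h1b hba2) hE0
       (show ((1-b)*(a^2-b))*((1-a)*(a^3-b)) = E₀ from by ring),
     fr (mul_ne_zero h1a hba3) hE0
       (show ((1-a)*(a^3-b))*((1-b)*(a^2-b)) = E₀ from by ring)]
  simp only [← sub_div, ← add_div]
  rw [div_eq_div_iff hE0 hE0]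
  ring

lemma c_one : P1 1 h + P2 1 h = Fc (a⁻¹) 1 (b⁻¹) h := by
  rw [P2z1, P1sf 1 h (by norm_num), Fc, add_zero]
  rw [show a⁻¹*a^2 = a from by
    rw [show a⁻¹*a^2 = a*(a*a⁻¹) from by ring, mul_inv_cancel₀ ha, mul_one]]
  rw [show ((1:RF) + a*b⁻¹)*b = b+a from by
    rw [add_mul, one_mul, mul_assoc, inv_mul_cancel₀ hb, mul_one]]
  rw [show (a⁻¹*(a^3)^h - a⁻¹*b^h)*a^3 = ((a^3)^h - b^h)*a^2 from by
    rw [show (a⁻¹*(a^3)^h - a⁻¹*b^h)*a^3 = ((a^3)^h - b^h)*a^2*(a*a⁻¹) from by ring,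
      mul_inv_cancel₀ ha, mul_one]]
  simp only [fr (mul_ne_zero h1b h1a) hE0
       (show ((1-b)*(1-a))*((a^2-b)*(a^3-b)) = E₀ from by ring),
     fr (mul_ne_zero hab3' h1a) hE0
       (show ((b-a^3)*(1-a))*(-((1-b)*(a^2-b))) = E₀ from by ring),
     fr (mul_ne_zero h1a h1b) hE0
       (show ((1-a)*(1-b))*((a^2-b)*(a^3-b)) = E₀ from by ring),
     fr (mul_ne_zero h1a hba2) hE0
       (show ((1-a)*(a^2-b))*((1-b)*(a^3-b)) = E₀ from by ring),
     fr (mul_ne_zero h1b hba2) hE0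
       (show ((1-b)*(a^2-b))*((1-a)*(a^3-b)) = E₀ from by ring),
     fr (mul_ne_zero h1a hba3) hE0
       (show ((1-a)*(a^3-b))*((1-b)*(a^2-b)) = E₀ from by ring)]
  simp only [← sub_div, ← add_div]
  rw [div_eq_div_iff hE0 hE0]
  ring

end cases

lemma C_main (k h : ℕ) : P1 k h + P2 k h
    = Fc (a^((k:ℤ)-2)) (b^((((k+1)/2:ℕ):ℤ)-1)) (b^(((k/2:ℕ):ℤ)-1)) h := by
  obtain ⟨u, hu⟩ : ∃ u, k = 0 ∨ k = 1 ∨ k = 2 ∨ k = 3 ∨ k = 2*u+4 ∨ k = 2*u+5 :=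
    ⟨(k-4)/2, by omega⟩
  rcases hu with rfl | rfl | rfl | rfl | rfl | rfl
  · norm_num [zpow_ofNat]; exact c_zero h
  · norm_num [zpow_ofNat]; exact c_one h
  · norm_num [zpow_ofNat]; exact c_two h
  · norm_num [zpow_ofNat]; exact c_three h
  · rw [show (((2*u+4:ℕ):ℤ)-2) = ((2*(u+1):ℕ):ℤ) from by push_cast; ring, zpow_natCast,
      show ((2*u+4+1)/2:ℕ) = u+2 from by omega,
      show ((2*u+4)/2:ℕ) = u+2 from by omega]
    rw [show (((u+2:ℕ):ℤ))-1 = ((u+1:ℕ):ℤ) from by push_cast; ring, zpow_natCast]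
    exact c_even h u
  · rw [show (((2*u+5:ℕ):ℤ)-2) = ((2*u+3:ℕ):ℤ) from by push_cast; ring, zpow_natCast,
      show ((2*u+5+1)/2:ℕ) = u+3 from by omega,
      show ((2*u+5)/2:ℕ) = u+2 from by omega,
      show (((u+3:ℕ):ℤ))-1 = ((u+2:ℕ):ℤ) from by push_cast; ring, zpow_natCast]
    rw [show (((u+2:ℕ):ℤ))-1 = ((u+1:ℕ):ℤ) from by push_cast; ring, zpow_natCast]
    exact c_odd h u


local notation "Eb" => (1-a)*((1-b)*((1-c)*((a^2-b)*((a^3-b)*((b-c)*(a^3-c))))))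

lemma hEb : Eb ≠ 0 :=
  mul_ne_zero h1a (mul_ne_zero h1b (mul_ne_zero h1c (mul_ne_zero hba2
    (mul_ne_zero hba3 (mul_ne_zero hcb hca3)))))

lemma lemD (g : ℕ) (K D1 D2 : RF) :
    ∑ t ∈ range (g+1), c^t * Fc K D1 D2 (g-t)
      = (1 - c^(g+1))/((1-a)*(1-b)*(1-c))
        - K*a^2*(b^(g+1) - c^(g+1))/((1-a)*(b-c)*(a^2-b))
        - (D1+a*D2)*b*(c^(g+1) - b^(g+1))/((1-b)*(b-c)*(a^2-b))
        - K*a^6*((a^3)^g - c^g)/((1-a)*(a^3-c)*(a^3-b))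
        + K*a^3*b*(b^g - c^g)/((1-a)*(b-c)*(a^3-b)) := by
  have step : ∀ t ∈ range (g+1), c^t * Fc K D1 D2 (g-t)
      = (1/((1-a)*(1-b)))*c^t
        - (K*a^2/((1-a)*(a^2-b)))*(c^t*b^(g+1-1-t))
        + ((D1+a*D2)*b/((1-b)*(a^2-b)))*(c^t*b^(g+1-1-t))
        - (K*a^3/((1-a)*(a^3-b)))*(c^t*(a^3)^(g+1-1-t))
        + (K*a^3/((1-a)*(a^3-b)))*(c^t*b^(g+1-1-t)) := by
    intro t ht
    rw [mem_range] at ht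
    rw [Fc, show g+1-1-t = g-t from by omega]
    ring
  rw [Finset.sum_congr rfl step]
  simp only [Finset.sum_add_distrib, Finset.sum_sub_distrib, ← Finset.mul_sum]
  rw [geo1 c h1c (g+1), geo2 c b hbc' (g+1), geo2 c (a^3) hca3' (g+1)]
  simp only [div_mul_div_comm, ← mul_div_assoc, div_mul_eq_mul_div, div_div]
  simp only [fr (mul_ne_zero (mul_ne_zero h1a h1b) h1c) hEb
       (show ((1-a)*(1-b))*(1-c)*((a^2-b)*((a^3-b)*((b-c)*(a^3-c)))) = Eb from by ring),
     fr (mul_ne_zero (mul_ne_zero h1a hba2) hbc') hEb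
       (show ((1-a)*(a^2-b))*(c-b)*(-((1-b)*((1-c)*((a^3-b)*(a^3-c))))) = Eb from by ring),
     fr (mul_ne_zero (mul_ne_zero h1b hba2) hbc') hEb
       (show ((1-b)*(a^2-b))*(c-b)*(-((1-a)*((1-c)*((a^3-b)*(a^3-c))))) = Eb from by ring),
     fr (mul_ne_zero (mul_ne_zero h1a hba3) hca3') hEb
       (show ((1-a)*(a^3-b))*(c-a^3)*(-((1-b)*((1-c)*((a^2-b)*(b-c))))) = Eb from by ring),
     fr (mul_ne_zero (mul_ne_zero h1a hba3) hbc') hEb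
       (show ((1-a)*(a^3-b))*(c-b)*(-((1-b)*((1-c)*((a^2-b)*(a^3-c))))) = Eb from by ring),
     fr (mul_ne_zero (mul_ne_zero h1a h1b) h1c) hEb
       (show (1-a)*(1-b)*(1-c)*((a^2-b)*((a^3-b)*((b-c)*(a^3-c)))) = Eb from by ring),
     fr (mul_ne_zero (mul_ne_zero h1a hcb) hba2) hEb
       (show (1-a)*(b-c)*(a^2-b)*((1-b)*((1-c)*((a^3-b)*(a^3-c)))) = Eb from by ring),
     fr (mul_ne_zero (mul_ne_zero h1b hcb) hba2) hEb
       (show (1-b)*(b-c)*(a^2-b)*((1-a)*((1-c)*((a^3-b)*(a^3-c)))) = Eb from by ring),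
     fr (mul_ne_zero (mul_ne_zero h1a hca3) hba3) hEb
       (show (1-a)*(a^3-c)*(a^3-b)*((1-b)*((1-c)*((a^2-b)*(b-c)))) = Eb from by ring),
     fr (mul_ne_zero (mul_ne_zero h1a hcb) hba3) hEb
       (show (1-a)*(b-c)*(a^3-b)*((1-b)*((1-c)*((a^2-b)*(a^3-c)))) = Eb from by ring)]
  simp only [← sub_div, ← add_div]
  rw [div_eq_div_iff hEb hEb]
  ring


lemma t2 (g k : ℕ) :
    a ^ ((k : ℤ) - 2) * b ^ g * (1 - c ^ (g + 1) / b ^ (g + 1))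
            / ((1 - a) * (1 - c / b) * (1 - b / a ^ 2))
      = a^((k:ℤ)-2)*a^2*(b^(g+1) - c^(g+1))/((1-a)*(b-c)*(a^2-b)) := by
  rw [osd c hb, osd b (pow_ne_zero 2 ha), osd (c^(g+1)) (pow_ne_zero (g+1) hb)]
  simp only [div_mul_div_comm, ← mul_div_assoc, div_mul_eq_mul_div, div_div, div_div_eq_mul_div]
  rw [div_eq_div_iff
    (mul_ne_zero (pow_ne_zero (g+1) hb) (mul_ne_zero (mul_ne_zero h1a hcb) hba2))
    (mul_ne_zero (mul_ne_zero h1a hcb) hba2)]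
  ring

lemma t3 (g k : ℕ) :
    (b ^ ((g : ℤ) + (((k + 1) / 2 : ℕ) : ℤ) - 1)
        + a * b ^ ((g : ℤ) + ((k / 2 : ℕ) : ℤ) - 1)) * (1 - c ^ (g + 1) / b ^ (g + 1))
      / ((1 - b) * (1 - c / b) * (1 - a ^ 2 / b))
    = (b^((((k+1)/2:ℕ):ℤ)-1) + a*b^(((k/2:ℕ):ℤ)-1))*b*(c^(g+1) - b^(g+1))
      / ((1-b)*(b-c)*(a^2-b)) := by
  rw [show (g:ℤ) + (((k+1)/2:ℕ):ℤ) - 1 = ((g:ℕ):ℤ) + ((((k+1)/2:ℕ):ℤ) - 1) from by ring,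
      zpow_add₀ hb, zpow_natCast,
      show (g:ℤ) + ((k/2:ℕ):ℤ) - 1 = ((g:ℕ):ℤ) + (((k/2:ℕ):ℤ) - 1) from by ring,
      zpow_add₀ hb, zpow_natCast]
  rw [osd c hb, osd (a^2) hb, osd (c^(g+1)) (pow_ne_zero (g+1) hb)]
  simp only [div_mul_div_comm, ← mul_div_assoc, div_mul_eq_mul_div, div_div, div_div_eq_mul_div]
  rw [div_eq_div_iff
    (mul_ne_zero (pow_ne_zero (g+1) hb) (mul_ne_zero (mul_ne_zero h1b hcb) hab2'))
    (mul_ne_zero (mul_ne_zero h1b hcb) hba2)]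
  ring

lemma t4 (g k : ℕ) :
    a ^ (3 * (g : ℤ) + k - 2) * (1 - c ^ g / a ^ (3 * g))
      / ((1 - a) * (1 - c / a ^ 3) * (1 - b / a ^ 3))
    = a^((k:ℤ)-2)*a^6*((a^3)^g - c^g)/((1-a)*(a^3-c)*(a^3-b)) := by
  rw [show 3 * (g:ℤ) + k - 2 = ((3*g:ℕ):ℤ) + ((k:ℤ) - 2) from by push_cast; ring,
      zpow_add₀ ha, zpow_natCast, pow_mul a 3 g]
  rw [osd c (pow_ne_zero 3 ha), osd b (pow_ne_zero 3 ha), osd (c^g) (pow_ne_zero g (pow_ne_zero 3 ha))]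
  simp only [div_mul_div_comm, ← mul_div_assoc, div_mul_eq_mul_div, div_div, div_div_eq_mul_div]
  rw [div_eq_div_iff
    (mul_ne_zero (pow_ne_zero g (pow_ne_zero 3 ha)) (mul_ne_zero (mul_ne_zero h1a hca3) hba3))
    (mul_ne_zero (mul_ne_zero h1a hca3) hba3)]
  ring

lemma t5 (g k : ℕ) :
    a ^ ((k : ℤ) - 2) * b ^ g * (1 - c ^ g / b ^ g)
      / ((1 - a) * (1 - c / b) * (1 - b / a ^ 3))
    = a^((k:ℤ)-2)*a^3*b*(b^g - c^g)/((1-a)*(b-c)*(a^3-b)) := by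
  rw [osd c hb, osd b (pow_ne_zero 3 ha), osd (c^g) (pow_ne_zero g hb)]
  simp only [div_mul_div_comm, ← mul_div_assoc, div_mul_eq_mul_div, div_div, div_div_eq_mul_div]
  rw [div_eq_div_iff
    (mul_ne_zero (pow_ne_zero g hb) (mul_ne_zero (mul_ne_zero h1a hcb) hba3))
    (mul_ne_zero (mul_ne_zero h1a hcb) hba3)]
  ring



/-- The set `S^g_k` is finite and, in `ℚ(a,b,c)`,
`Σ_{(r,s,t) ∈ S^g_k} a^r b^s c^t` equals the explicit five-term rational function of the
lemma (negative exponents such as `a^{k−2}` being interpreted as `zpow` in the field). -/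
theorem statement18 (g k : ℕ) :
    (Sgk g k).Finite ∧
    ∑ᶠ x ∈ Sgk g k, a ^ x.1 * b ^ x.2.1 * c ^ x.2.2
      = (1 - c ^ (g + 1)) / ((1 - a) * (1 - b) * (1 - c))
        - a ^ ((k : ℤ) - 2) * b ^ g * (1 - c ^ (g + 1) / b ^ (g + 1))
            / ((1 - a) * (1 - c / b) * (1 - b / a ^ 2))
        - (b ^ ((g : ℤ) + (((k + 1) / 2 : ℕ) : ℤ) - 1)
              + a * b ^ ((g : ℤ) + ((k / 2 : ℕ) : ℤ) - 1)) * (1 - c ^ (g + 1) / b ^ (g + 1))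
            / ((1 - b) * (1 - c / b) * (1 - a ^ 2 / b))
        - a ^ (3 * (g : ℤ) + k - 2) * (1 - c ^ g / a ^ (3 * g))
            / ((1 - a) * (1 - c / a ^ 3) * (1 - b / a ^ 3))
        + a ^ ((k : ℤ) - 2) * b ^ g * (1 - c ^ g / b ^ g)
            / ((1 - a) * (1 - c / b) * (1 - b / a ^ 3)) := by
  constructor
  · rw [sgk_eq]; exact (Sfin g k).finite_toSet
  · rw [sgk_eq, finsum_mem_coe_finset, sum_Sfin,
      Finset.sum_congr rfl (fun t _ => by rw [C_main k (g-t)]), lemD,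
      t2 g k, t3 g k, t4 g k, t5 g k]


end Statement18
end
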